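/- Let N ≥ 5 be an integer, let λ, μ ∈ ℂ with λ^N = μ^N = 1, and let ν be a nonzero real number satisfying λ² + λ^{−2} + μ² + μ^{−2} + ν² + ν^{−2} = 6. Define p : (ℤ/N)³ → ℂ by p(a) = λ^{a₁} μ^{a₂} ν^{ā₃}, where ā₃ ∈ {0, 1, …, N−1} is the representative of the third coordinate a₃. Then the discrete Laplacian (Δp)(a) = Σ_{i=1}^{3} (p(a+2eᵢ) + p(a−2eᵢ)) − 6p(a) satisfies: (Δp)(a) = λ^{a₁} μ^{a₂} ν^{ā₃} (ν^{N−2} − ν^{−2}) if ā₃ ∈ {0, 1}; (Δp)(a) = λ^{a₁} μ^{a₂} ν^{ā₃} (ν^{2−N} − ν²) if ā₃ ∈ {N−2, N−1}; and (Δp)(a) = 0 otherwise. -/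

import Mathlib

/-- The discrete Laplacian with shifts by `2` on functions on the periodic lattice
`(ℤ/N)³`: `(Δp)(a) = Σ_{i=1}^{3} (p(a + 2eᵢ) + p(a - 2eᵢ)) - 6 p(a)`. -/
def discLap {R : Type*} [Ring R] (N : ℕ) (p : (Fin 3 → ZMod N) → R)
    (a : Fin 3 → ZMod N) : R :=
  (∑ i : Fin 3, (p (a + Pi.single i (2 : ZMod N)) + p (a - Pi.single i (2 : ZMod N)))) -
    6 * p a

/-!
The function `p` factors as `λ^{a₁} · μ^{a₂} · ν^{ā₃}`, so `Δp` is `p` times the sum of the three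
one-dimensional "second differences" `f(x+2) + f(x-2)` divided by `f(x)`, minus `6`.  For the roots of
unity `λ, μ` the representative `x.val` may be replaced by any integer lift, giving `λ² + λ⁻²` and
`μ² + μ⁻²`.  For `ν` this holds only when `x ± 2` does not wrap around, i.e. for `2 ≤ ā₃ ≤ N - 3`;
near the two ends one of the shifts picks up an extra factor `ν^{±N}`, which is the boundary term.
-/

theorem discLap_of_eq_mul_mul {R : Type*} [CommRing R] {N : ℕ} {p : (Fin 3 → ZMod N) → R}
    (f g h : ZMod N → R) (hp : ∀ b, p b = f (b 0) * g (b 1) * h (b 2)) (a : Fin 3 → ZMod N) :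
    discLap N p a =
      (f (a 0 + 2) + f (a 0 - 2)) * g (a 1) * h (a 2) +
        f (a 0) * (g (a 1 + 2) + g (a 1 - 2)) * h (a 2) +
        f (a 0) * g (a 1) * (h (a 2 + 2) + h (a 2 - 2)) - 6 * (f (a 0) * g (a 1) * h (a 2)) := by
  simp only [discLap, hp, Fin.isValue, Pi.add_apply, Pi.single_apply, Pi.sub_apply,
    Fin.sum_univ_three, ↓reduceIte, one_ne_zero, add_zero, Fin.reduceEq, sub_zero, zero_ne_one]
  ring

section ZModVal

variable {G₀ : Type*} [GroupWithZero G₀] {N : ℕ} [NeZero N] {z : G₀}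

theorem pow_val_add_natCast (hz : z ≠ 0) {c : ℕ} (hc : c < N) (x : ZMod N) :
    z ^ (x + c).val = z ^ x.val * if x.val + c < N then z ^ (c : ℤ) else z ^ ((c : ℤ) - N) := by
  have hcv : (c : ZMod N).val = c := ZMod.val_natCast_of_lt hc
  rw [← zpow_natCast, ← zpow_natCast]
  split_ifs with h <;> rw [← zpow_add₀ hz]
  · rw [ZMod.val_add_of_lt (by omega), hcv, Nat.cast_add]
  · rw [ZMod.val_add_of_le (by omega), hcv]
    congr 1
    push_cast [show N ≤ x.val + c by omega]
    ring

theorem pow_val_sub_natCast (hz : z ≠ 0) {c : ℕ} (hc : c < N) (x : ZMod N) :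
    z ^ (x - c).val = z ^ x.val * if c ≤ x.val then z ^ (-(c : ℤ)) else z ^ ((N : ℤ) - c) := by
  have hcv : (c : ZMod N).val = c := ZMod.val_natCast_of_lt hc
  rw [← zpow_natCast, ← zpow_natCast]
  split_ifs with h <;> rw [← zpow_add₀ hz]
  · rw [ZMod.val_sub (by omega), hcv]
    push_cast [h]
    ring_nf
  · have hsum := ZMod.val_add_val_of_le (a := x - (c : ZMod N)) (b := (c : ZMod N)) ?_
    · rw [sub_add_cancel, hcv] at hsum
      congr 1
      omega
    · by_contra! hlt
      have hval := ZMod.val_add_of_lt hlt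
      rw [sub_add_cancel, hcv] at hval
      omega

end ZModVal

theorem pow_val_add_two_add_pow_val_sub_two_of_pow_eq_one {K : Type*} [DivisionRing K] {N : ℕ}
    (hN : 3 ≤ N) {z : K} (hz : z ^ N = 1) (x : ZMod N) :
    z ^ (x + 2).val + z ^ (x - 2).val = z ^ x.val * (z ^ (2 : ℤ) + z ^ (-2 : ℤ)) := by
  have : NeZero N := ⟨by omega⟩
  have hz₀ : z ≠ 0 := ne_zero_pow (n := N) (by omega) (by rw [hz]; exact one_ne_zero)
  have hzN : z ^ (N : ℤ) = 1 := by rw [zpow_natCast, hz]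
  have hadd := pow_val_add_natCast hz₀ (c := 2) (by omega) x
  have hsub := pow_val_sub_natCast hz₀ (c := 2) (by omega) x
  simp only [Nat.cast_ofNat, zpow_sub₀ hz₀, hzN, div_one, one_div, ← zpow_neg, ite_self] at hadd hsub
  rw [hadd, hsub, mul_add]

theorem pow_val_add_two_add_pow_val_sub_two {K : Type*} [Field K] {N : ℕ} (hN : 4 ≤ N)
    {z : K} (hz : z ≠ 0) (x : ZMod N) :
    z ^ (x + 2).val + z ^ (x - 2).val =
      z ^ x.val * (z ^ (2 : ℤ) + z ^ (-2 : ℤ) +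
        if x.val = 0 ∨ x.val = 1 then z ^ ((N : ℤ) - 2) - z ^ (-2 : ℤ)
        else if x.val = N - 2 ∨ x.val = N - 1 then z ^ (2 - (N : ℤ)) - z ^ (2 : ℤ)
        else 0) := by
  have : NeZero N := ⟨by omega⟩
  have hx := x.val_lt
  have hadd := pow_val_add_natCast hz (c := 2) (by omega) x
  have hsub := pow_val_sub_natCast hz (c := 2) (by omega) x
  simp only [Nat.cast_ofNat] at hadd hsub
  rw [hadd, hsub]
  split_ifs <;> first | omega | ring

theorem discLap_truncated_harmonic
    (N : ℕ) (hN : 5 ≤ N)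
    (lam mu : ℂ) (hlam : lam ^ N = 1) (hmu : mu ^ N = 1)
    (ν : ℝ) (hν : ν ≠ 0)
    (heq : lam ^ (2 : ℤ) + lam ^ (-2 : ℤ) + mu ^ (2 : ℤ) + mu ^ (-2 : ℤ) +
      (ν : ℂ) ^ (2 : ℤ) + (ν : ℂ) ^ (-2 : ℤ) = 6)
    (p : (Fin 3 → ZMod N) → ℂ)
    (hp : ∀ a : Fin 3 → ZMod N,
      p a = lam ^ (a 0).val * mu ^ (a 1).val * (ν : ℂ) ^ (a 2).val) :
    ∀ a : Fin 3 → ZMod N,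
      discLap N p a =
        if (a 2).val = 0 ∨ (a 2).val = 1 then
          lam ^ (a 0).val * mu ^ (a 1).val * (ν : ℂ) ^ (a 2).val *
            ((ν : ℂ) ^ ((N : ℤ) - 2) - (ν : ℂ) ^ (-2 : ℤ))
        else if (a 2).val = N - 2 ∨ (a 2).val = N - 1 then
          lam ^ (a 0).val * mu ^ (a 1).val * (ν : ℂ) ^ (a 2).val *
            ((ν : ℂ) ^ (2 - (N : ℤ)) - (ν : ℂ) ^ (2 : ℤ))
        else 0 := by
  intro a
  rw [discLap_of_eq_mul_mul (lam ^ ·.val) (mu ^ ·.val) ((ν : ℂ) ^ ·.val) hp,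
    pow_val_add_two_add_pow_val_sub_two_of_pow_eq_one (by omega) hlam,
    pow_val_add_two_add_pow_val_sub_two_of_pow_eq_one (by omega) hmu,
    pow_val_add_two_add_pow_val_sub_two (by omega) (Complex.ofReal_ne_zero.mpr hν)]
  split_ifs <;>
    linear_combination lam ^ (a 0).val * mu ^ (a 1).val * (ν : ℂ) ^ (a 2).val * heq
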